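/- Let μ be a monotone measure on a finite set 𝒜 with at least two elements, let a, b ∈ 𝒜 be distinct duplicates with respect to μ, and let f : 𝒜 → ℝ satisfy f(a) ≤ f(b). Then ∫ f dμ = ∫ f|_{𝒜∖{a}} dμ|_{𝒫(𝒜∖{a})}, i.e., the Choquet integral of f over 𝒜 with respect to μ equals the Choquet integral of the restriction of f to 𝒜 ∖ {a} with respect to the restriction of μ to subsets of 𝒜 ∖ {a}. -/

import Mathlib

open Finset

/-- The set `{x*_k, …, x*_{n-1}}` (0-indexed): the image under the enumeration `e`
of the indices `≥ k`. -/
def upSet {X : Type*} [DecidableEq X] {n : ℕ} (e : Fin n ≃ X) (k : ℕ) : Finset X :=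
  (Finset.univ.filter fun j : Fin n => k ≤ (j : ℕ)).image e

/-- The Choquet integral of `f` with respect to the set function `μ`, computed via an
enumeration `e : Fin n ≃ X` (assumed to sort `f` nondecreasingly):
`∑ i, f(x*_i) · [μ(A*_i) − μ(A*_{i+1})]` where `A*_i = {x*_i, …, x*_{n-1}}`
(note `A*_n = ∅`, and `μ ∅ = 0` for a monotone measure). -/
def choquetSum {X : Type*} [DecidableEq X] {n : ℕ} (μ : Finset X → ℝ) (f : X → ℝ)
    (e : Fin n ≃ X) : ℝ :=
  ∑ i : Fin n, f (e i) * (μ (upSet e i) - μ (upSet e ((i : ℕ) + 1)))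

/-!
All sorted enumerations give the same Choquet sum: after Abel summation it reads
`∑ᵢ (f x*ᵢ - f x*ᵢ₋₁) μ(A*ᵢ)`, and the only sets `A*ᵢ` with a nonzero coefficient are superlevel
sets of `f`. So we may use the enumeration obtained from a sorted enumeration of `𝒜 ∖ {a}` by
inserting `a` just before the first `x` with `f a ≤ f x`. Every `A*ᵢ` up to the position of `a`
then contains `b`, so `μ(A*ᵢ ∪ {a}) = μ(A*ᵢ ∪ {b}) = μ(A*ᵢ)`: the term of `a` vanishes and the
remaining terms are those of the restricted Choquet sum.
-/

theorem Fin.sum_mul_sub_succ_congr {R : Type*} [CommRing R] {n : ℕ} (c : Fin (n + 1) → R)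
    {M M' : ℕ → R} (h₀ : M 0 = M' 0) (hlast : M (n + 1) = M' (n + 1))
    (h : ∀ i : Fin n, c i.castSucc ≠ c i.succ → M (i + 1) = M' (i + 1)) :
    ∑ i, c i * (M i - M (i + 1)) = ∑ i, c i * (M' i - M' (i + 1)) := by
  have shift : ∑ i, c i * (M i - M' i) = ∑ i, c i * (M (i + 1) - M' (i + 1)) := by
    rw [Fin.sum_univ_succ, Fin.sum_univ_castSucc]
    simp only [Fin.val_zero, h₀, sub_self, mul_zero, zero_add, Fin.val_last, hlast, add_zero,
      Fin.val_succ, Fin.val_castSucc]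
    refine sum_congr rfl fun i _ => ?_
    by_cases hc : c i.castSucc = c i.succ
    · rw [hc]
    · rw [h i hc, sub_self, mul_zero, mul_zero]
  simp only [mul_sub, sum_sub_distrib] at shift ⊢
  linear_combination shift

theorem Fin.val_succAbove {n : ℕ} (k : Fin (n + 1)) (j : Fin n) :
    (k.succAbove j : ℕ) = if (j : ℕ) < k then (j : ℕ) else (j : ℕ) + 1 := by
  unfold Fin.succAbove
  split_ifs <;> simp_all [Fin.lt_def]

theorem Fin.monotone_insertNth {α : Type*} [Preorder α] {n : ℕ} {g : Fin n → α}
    (hg : Monotone g) {k : Fin (n + 1)} {c : α} (hlt : ∀ j, j.castSucc < k → g j ≤ c)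
    (hge : ∀ j, k ≤ j.castSucc → c ≤ g j) :
    Monotone (Fin.insertNth (α := fun _ ↦ α) k c g) := by
  intro i i' hii'
  cases i using Fin.succAboveCases k with
  | x => cases i' using Fin.succAboveCases k with
    | x => simp
    | p j' =>
      have hk : k < k.succAbove j' := hii'.lt_of_ne (k.succAbove_ne j').symm
      simpa using hge j' ((k.lt_succAbove_iff_le_castSucc j').1 hk)
  | p j => cases i' using Fin.succAboveCases k with
    | x =>
      have hk : k.succAbove j < k := hii'.lt_of_ne (k.succAbove_ne j)
      simpa using hlt j ((k.succAbove_lt_iff_castSucc_lt j).1 hk)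
    | p j' => simpa using hg (Fin.succAbove_le_succAbove_iff.1 hii')

theorem Fin.exists_le_monotone_insertNth {α : Type*} [LinearOrder α] {n : ℕ} {g : Fin n → α}
    (hg : Monotone g) {c : α} {q : Fin n} (hq : c ≤ g q) :
    ∃ k ≤ q.castSucc, Monotone (Fin.insertNth (α := fun _ ↦ α) k c g) := by
  set S := univ.filter fun j => c ≤ g j
  have hne : S.Nonempty := ⟨q, by simpa [S] using hq⟩
  have hp : c ≤ g (S.min' hne) := by simpa [S] using S.min'_mem hne
  refine ⟨(S.min' hne).castSucc,
    Fin.castSucc_le_castSucc_iff.2 (min'_le _ _ (by simpa [S] using hq)),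
    Fin.monotone_insertNth hg (fun j hj => ?_) fun j hj =>
      hp.trans (hg (Fin.castSucc_le_castSucc_iff.1 hj))⟩
  by_contra! hcj
  exact (Fin.castSucc_lt_castSucc_iff.1 hj).not_ge (min'_le S j (by simpa [S] using hcj.le))

section UpSet

variable {X : Type*} [DecidableEq X] {n : ℕ}

theorem mem_upSet {e : Fin n ≃ X} {k : ℕ} {x : X} : x ∈ upSet e k ↔ k ≤ e.symm x := by
  simp [upSet, ← Equiv.eq_symm_apply]

theorem apply_mem_upSet {e : Fin n ≃ X} {k : ℕ} {j : Fin n} : e j ∈ upSet e k ↔ k ≤ j := by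
  simp [mem_upSet]

theorem upSet_zero_eq (e₁ e₂ : Fin n ≃ X) : upSet e₁ 0 = upSet e₂ 0 := by
  ext
  simp [mem_upSet]

theorem upSet_eq_empty (e : Fin n ≃ X) {k : ℕ} (hk : n ≤ k) : upSet e k = ∅ := by
  ext x
  simpa [mem_upSet] using (e.symm x).isLt.trans_le hk

theorem mem_upSet_succ_iff {f : X → ℝ} {e : Fin (n + 1) ≃ X} (hf : Monotone (f ∘ e))
    {i : Fin n} (hjump : f (e i.castSucc) < f (e i.succ)) {x : X} :
    x ∈ upSet e (i + 1) ↔ f (e i.succ) ≤ f x := by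
  rw [mem_upSet]
  constructor
  · intro h
    simpa using hf (show i.succ ≤ e.symm x from h)
  · intro h
    by_contra! hx
    have hle : e.symm x ≤ i.castSucc := Fin.le_iff_val_le_val.2 (by rw [Fin.val_castSucc]; omega)
    have : f x ≤ f (e i.castSucc) := by simpa using hf hle
    linarith

theorem choquetSum_eq_of_monotone (μ : Finset X → ℝ) {f : X → ℝ} {e₁ e₂ : Fin n ≃ X}
    (h₁ : Monotone (f ∘ e₁)) (h₂ : Monotone (f ∘ e₂)) :
    choquetSum μ f e₁ = choquetSum μ f e₂ := by
  have hfe : f ∘ e₁ = f ∘ e₂ := by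
    simpa [Function.comp_def] using
      Tuple.unique_monotone (f := f ∘ e₂) (σ := e₁.trans e₂.symm) (τ := Equiv.refl _)
        (by simpa [Function.comp_def] using h₁) h₂
  cases n with
  | zero => simp [choquetSum]
  | succ n =>
    have hfe' : ∀ i, f (e₁ i) = f (e₂ i) := congrFun hfe
    unfold choquetSum
    simp only [hfe']
    refine Fin.sum_mul_sub_succ_congr (f ∘ e₂) (M := fun k => μ (upSet e₁ k))
      (M' := fun k => μ (upSet e₂ k)) (congrArg μ (upSet_zero_eq e₁ e₂))
      (by rw [upSet_eq_empty e₁ le_rfl, upSet_eq_empty e₂ le_rfl]) fun i hi => congrArg μ ?_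
    have hjump : f (e₂ i.castSucc) < f (e₂ i.succ) := (h₂ (Fin.castSucc_le_succ i)).lt_of_ne hi
    ext x
    rw [mem_upSet_succ_iff h₁ (by rwa [hfe', hfe']), mem_upSet_succ_iff h₂ hjump, hfe']

end UpSet

section InsertEnum

variable {A : Type*} [DecidableEq A] {m : ℕ} {a : A} (e' : Fin m ≃ {x : A // x ≠ a})
  (k : Fin (m + 1))

def insertEnum : Fin (m + 1) ≃ A :=
  (finSuccEquiv' k).trans (e'.optionCongr.trans (Equiv.optionSubtypeNe a))

@[simp]
theorem insertEnum_self : insertEnum e' k k = a := by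
  simp [insertEnum]

@[simp]
theorem insertEnum_succAbove (j : Fin m) : insertEnum e' k (k.succAbove j) = e' j := by
  simp [insertEnum]

theorem comp_insertEnum {β : Type*} (f : A → β) :
    f ∘ insertEnum e' k = Fin.insertNth (α := fun _ ↦ β) k (f a) fun j => f (e' j) := by
  funext i
  cases i using Fin.succAboveCases k <;> simp

theorem upSet_insertEnum_of_le {i : ℕ} (hi : i ≤ k) :
    upSet (insertEnum e' k) i = insert a ((upSet e' i).image Subtype.val) := by
  ext x
  obtain ⟨p, rfl⟩ := (insertEnum e' k).surjective x
  rw [apply_mem_upSet]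
  cases p using Fin.succAboveCases k with
  | x => simpa using hi
  | p j =>
    simp only [insertEnum_succAbove, mem_insert, (e' j).2, false_or,
      Subtype.val_injective.mem_finset_image, apply_mem_upSet, Fin.val_succAbove]
    split_ifs <;> omega

theorem upSet_insertEnum_of_lt {i : ℕ} (hi : k < i) :
    upSet (insertEnum e' k) i = (upSet e' (i - 1)).image Subtype.val := by
  ext x
  obtain ⟨p, rfl⟩ := (insertEnum e' k).surjective x
  rw [apply_mem_upSet]
  cases p using Fin.succAboveCases k with
  | x => simpa using hi
  | p j =>
    simp only [insertEnum_succAbove, Subtype.val_injective.mem_finset_image, apply_mem_upSet,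
      Fin.val_succAbove]
    split_ifs <;> omega

theorem measure_upSet_insertEnum_of_le {μ : Finset A → ℝ} {b : A} (hb : b ≠ a)
    (hdup : ∀ S, μ (insert a S) = μ (insert b S)) (hbk : k ≤ (e'.symm ⟨b, hb⟩).castSucc)
    {i : ℕ} (hi : i ≤ k) :
    μ (upSet (insertEnum e' k) i) = μ ((upSet e' i).image Subtype.val) := by
  have hb_mem : b ∈ (upSet e' i).image Subtype.val :=
    mem_image.2 ⟨⟨b, hb⟩, mem_upSet.2 (hi.trans (by simpa [Fin.le_def] using hbk)), rfl⟩
  rw [upSet_insertEnum_of_le e' k hi, hdup, insert_eq_of_mem hb_mem]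

theorem choquetSum_insertEnum {μ : Finset A → ℝ} {b : A} (hb : b ≠ a)
    (hdup : ∀ S, μ (insert a S) = μ (insert b S)) (hbk : k ≤ (e'.symm ⟨b, hb⟩).castSucc)
    (f : A → ℝ) :
    choquetSum μ f (insertEnum e' k) =
      choquetSum (fun S => μ (S.image Subtype.val)) (fun x => f x.val) e' := by
  unfold choquetSum
  rw [Fin.sum_univ_succAbove _ k, measure_upSet_insertEnum_of_le e' k hb hdup hbk le_rfl,
    upSet_insertEnum_of_lt e' k (Nat.lt_add_one _), Nat.add_sub_cancel, sub_self, mul_zero,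
    zero_add]
  refine sum_congr rfl fun j _ => ?_
  rw [insertEnum_succAbove]
  rcases lt_or_ge j.castSucc k with h | h
  · have hj : (j : ℕ) < k := h
    rw [Fin.succAbove_of_castSucc_lt _ _ h, Fin.val_castSucc,
      measure_upSet_insertEnum_of_le e' k hb hdup hbk hj.le,
      measure_upSet_insertEnum_of_le e' k hb hdup hbk hj]
  · have hj : (k : ℕ) ≤ j := h
    rw [Fin.succAbove_of_le_castSucc _ _ h, Fin.val_succ, upSet_insertEnum_of_lt e' k (by omega),
      upSet_insertEnum_of_lt e' k (by omega)]
    rfl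

end InsertEnum

theorem choquet_integral_remove_duplicate_general
    {A : Type*} [DecidableEq A] {n m : ℕ}
    (μ : Finset A → ℝ)
    (a b : A) (hab : a ≠ b)
    (hdup : ∀ S : Finset A, μ (insert a S) = μ (insert b S))
    (f : A → ℝ) (hf : f a ≤ f b)
    (e : Fin n ≃ A) (hsort : Monotone (f ∘ e))
    (e' : Fin m ≃ {x : A // x ≠ a}) (hsort' : Monotone (fun i => f (e' i).val)) :
    choquetSum μ f e =
      choquetSum (fun S : Finset {x : A // x ≠ a} => μ (S.image Subtype.val))
        (fun x => f x.val) e' := by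
  obtain rfl : n = m + 1 := Fin.equiv_iff_eq.1 ⟨e.trans (insertEnum e' 0).symm⟩
  obtain ⟨k, hbk, hk⟩ := Fin.exists_le_monotone_insertNth hsort'
    (show f a ≤ f (e' (e'.symm ⟨b, hab.symm⟩)) by simpa using hf)
  rw [choquetSum_eq_of_monotone μ hsort (by rwa [comp_insertEnum e' k]),
    choquetSum_insertEnum e' k hab.symm hdup hbk]

/-- If `a, b` are distinct duplicates with respect to a monotone measure
`μ` on a finite set `𝒜` (with at least two elements) and `f(a) ≤ f(b)`, then the Choquet
integral of `f` over `𝒜` equals the Choquet integral of the restriction of `f` to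
`𝒜 \ {a}` with respect to the restriction of `μ` to subsets of `𝒜 \ {a}`. -/
theorem choquet_integral_remove_duplicate
    {A : Type*} [Fintype A] [DecidableEq A] {n m : ℕ}
    (μ : Finset A → ℝ) (hμ_empty : μ ∅ = 0)
    (hμ_mono : ∀ S T : Finset A, S ⊆ T → μ S ≤ μ T)
    (a b : A) (hab : a ≠ b)
    (hdup : ∀ S : Finset A, μ (insert a S) = μ (insert b S))
    (f : A → ℝ) (hf : f a ≤ f b)
    (e : Fin n ≃ A) (hsort : Monotone (f ∘ e))
    (e' : Fin m ≃ {x : A // x ≠ a}) (hsort' : Monotone (fun i => f (e' i).val)) :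
    choquetSum μ f e =
      choquetSum (fun S : Finset {x : A // x ≠ a} => μ (S.image Subtype.val))
        (fun x => f x.val) e' :=
  choquet_integral_remove_duplicate_general μ a b hab hdup f hf e hsort e' hsort'
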